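/- Let S be a numerical semigroup that is neither ordinary nor almost-ordinary, and let B(S) = (S \ {m(S)}) ∪ {u(S)} where u(S) is the sub-Frobenius number. Then B(S) is a numerical semigroup and e(B(S)) ≥ e(S), where e denotes the embedding dimension. -/

import Mathlib

open Set

/-- A numerical semigroup: a submonoid of ℕ with finite complement. -/
def IsNumSgp (S : Set ℕ) : Prop :=
  0 ∈ S ∧ (∀ a ∈ S, ∀ b ∈ S, a + b ∈ S) ∧ Sᶜ.Finite

/-- The Frobenius number: the largest gap. -/
noncomputable def frob (S : Set ℕ) : ℕ := sSup Sᶜ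

/-- The multiplicity: the least nonzero element. -/
noncomputable def mult (S : Set ℕ) : ℕ := sInf (S \ {0})

/-- The genus: the number of gaps. -/
noncomputable def genus (S : Set ℕ) : ℕ := Sᶜ.ncard

/-- The number of left elements: elements of S smaller than the Frobenius number. -/
noncomputable def leftEls (S : Set ℕ) : ℕ := {s ∈ S | s < frob S}.ncard

/-- x is a minimal generator of S: nonzero and not a sum of two nonzero elements of S. -/
def IsMinGen (S : Set ℕ) (x : ℕ) : Prop :=
  x ∈ S ∧ x ≠ 0 ∧ ¬ ∃ a ∈ S, ∃ b ∈ S, a ≠ 0 ∧ b ≠ 0 ∧ x = a + b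

/-- The embedding dimension: number of minimal generators. -/
noncomputable def edim (S : Set ℕ) : ℕ := {x | IsMinGen S x}.ncard

/-- The set of special gaps of S. -/
def SG (S : Set ℕ) : Set ℕ :=
  {h | h ∉ S ∧ 2 * h ∈ S ∧ ∀ s ∈ S, s ≠ 0 → h + s ∈ S}

/-- Irreducible numerical semigroup (characterization via special gaps). -/
def IsIrred (S : Set ℕ) : Prop := SG S = {frob S}

/-- Ordinary numerical semigroup. -/
def IsOrdinary (S : Set ℕ) : Prop := ∃ c, S = {0} ∪ {m | c ≤ m}

/-- Special numerical semigroup: every special gap other than F(S) is below the multiplicity. -/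
def IsSpecial (S : Set ℕ) : Prop := ∀ h ∈ SG S, h ≠ frob S → h < mult S

/-- The transform 𝒜, defined on non-special numerical semigroups. -/
noncomputable def Atrans (S : Set ℕ) : Set ℕ :=
  (S ∪ {sSup (SG S \ {frob S})}) \ {mult S}

/-- The sub-Frobenius number: the largest gap different from F(S). -/
noncomputable def subFrob (S : Set ℕ) : ℕ := sSup (Sᶜ \ {frob S})

/-- Almost-ordinary: exactly one gap greater than the multiplicity. -/
noncomputable def IsAlmostOrdinary (S : Set ℕ) : Prop := {h | h ∉ S ∧ mult S < h}.ncard = 1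

/-- The transform ℬ of Bras-Amorós. -/
noncomputable def Btrans (S : Set ℕ) : Set ℕ := (S \ {mult S}) ∪ {subFrob S}


/-!
Write `m`, `F`, `u` for the multiplicity, the Frobenius and the sub-Frobenius number of `S`.
Being neither ordinary nor almost ordinary means that `S` has two gaps above `m`, so `m < u`.
Every nonzero element of `B(S)` exceeds `m`, and `F - m` is a gap other than `F`, so `F ≤ u + m`;
hence `u + b > F` for every nonzero `b ∈ B(S)`, which makes `B(S)` closed under addition.
A minimal generator of `S` other than `m` and `F + m` stays minimal in `B(S)`, and `2m`, `u` are
new minimal generators of `B(S)`, so `e(B(S)) ≥ e(S)`.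
-/

theorem Set.ncard_le_ncard_of_sdiff_pair_subset {α : Type*} {s t : Set α} {a b c d : α}
    (ht : t.Finite) (hst : s \ {a, b} ⊆ t) (hcd : c ≠ d) (hc : c ∈ t \ s) (hd : d ∈ t \ s) :
    s.ncard ≤ t.ncard := by
  have hfin : (s \ {a, b}).Finite := ht.subset hst
  have hdisj : Disjoint (s \ {a, b}) {c, d} := by
    rw [Set.disjoint_left]
    rintro x ⟨hxs, -⟩ (rfl | rfl)
    exacts [hc.2 hxs, hd.2 hxs]
  calc s.ncard ≤ (s \ {a, b} ∪ {a, b}).ncard :=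
        Set.ncard_le_ncard (by rw [Set.sdiff_union_self]; exact Set.subset_union_left)
          (hfin.union (by simp))
    _ ≤ (s \ {a, b}).ncard + 2 :=
        (Set.ncard_union_le _ _).trans (by grw [Set.ncard_insert_le, Set.ncard_singleton])
    _ = (s \ {a, b} ∪ {c, d}).ncard := by rw [Set.ncard_union_eq hdisj hfin, Set.ncard_pair hcd]
    _ ≤ t.ncard := Set.ncard_le_ncard (Set.union_subset hst (Set.pair_subset hc.1 hd.1)) ht

theorem mult_le {S : Set ℕ} {s : ℕ} (hs : s ∈ S) (hs0 : s ≠ 0) : mult S ≤ s :=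
  Nat.sInf_le ⟨hs, hs0⟩

theorem le_frob {S : Set ℕ} (hfin : Sᶜ.Finite) {x : ℕ} (hx : x ∉ S) : x ≤ frob S :=
  le_csSup hfin.bddAbove hx

theorem frob_not_mem {S : Set ℕ} (hfin : Sᶜ.Finite) (hne : Sᶜ.Nonempty) : frob S ∉ S :=
  Nat.sSup_mem hne hfin.bddAbove

theorem mem_of_frob_lt {S : Set ℕ} (hfin : Sᶜ.Finite) {x : ℕ} (hx : frob S < x) : x ∈ S := by
  by_contra h
  exact (le_frob hfin h).not_gt hx

theorem le_subFrob {S : Set ℕ} (hfin : Sᶜ.Finite) {x : ℕ} (hx : x ∉ S) (hxF : x ≠ frob S) :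
    x ≤ subFrob S :=
  le_csSup (hfin.subset Set.sdiff_subset).bddAbove ⟨hx, hxF⟩

theorem subFrob_mem_of_ne_zero {S : Set ℕ} (hfin : Sᶜ.Finite) (hu : subFrob S ≠ 0) :
    subFrob S ∈ Sᶜ \ {frob S} := by
  rcases (Sᶜ \ {frob S}).eq_empty_or_nonempty with hemp | hne
  · simp [subFrob, hemp] at hu
  · exact Nat.sSup_mem hne (hfin.subset Set.sdiff_subset).bddAbove

namespace IsNumSgp

variable {S : Set ℕ} (hS : IsNumSgp S)
include hS

theorem mult_mem_sdiff_zero : mult S ∈ S \ {0} := by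
  obtain ⟨n, hn⟩ := (hS.2.2.union (Set.finite_singleton 0)).infinite_compl.nonempty
  rw [Set.compl_union, compl_compl] at hn
  exact Nat.sInf_mem ⟨n, hn⟩

theorem mult_mem : mult S ∈ S := hS.mult_mem_sdiff_zero.1

theorem mult_ne_zero : mult S ≠ 0 := hS.mult_mem_sdiff_zero.2

theorem two_mul_mult_mem : 2 * mult S ∈ S := two_mul (mult S) ▸ hS.2.1 _ hS.mult_mem _ hS.mult_mem

theorem finite_setOf_isMinGen : {x | IsMinGen S x}.Finite := by
  refine (Set.finite_Iic (2 * frob S + 2)).subset fun x ⟨_, _, hx⟩ => ?_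
  by_contra! hgt
  rw [Set.mem_Iic, not_le] at hgt
  exact hx ⟨frob S + 1, mem_of_frob_lt hS.2.2 (by omega), x - (frob S + 1),
    mem_of_frob_lt hS.2.2 (by omega), by omega, by omega, by omega⟩

theorem exists_gap_gt_mult (hord : ¬ IsOrdinary S) : ∃ h, h ∉ S ∧ mult S < h := by
  by_contra! hgaps
  refine hord ⟨mult S, Set.ext fun x => ⟨fun hx => ?_, ?_⟩⟩
  · rcases eq_or_ne x 0 with rfl | hx0
    · exact Or.inl rfl
    · exact Or.inr (mult_le hx hx0)
  · rintro (rfl | hx)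
    · exact hS.1
    · rcases (show mult S ≤ x from hx).eq_or_lt with rfl | hlt
      · exact hS.mult_mem
      · by_contra h
        exact (hgaps x h).not_gt hlt

theorem mult_lt_subFrob (hord : ¬ IsOrdinary S) (hao : ¬ IsAlmostOrdinary S) :
    mult S < subFrob S := by
  have hfin : {h | h ∉ S ∧ mult S < h}.Finite := hS.2.2.subset fun _ hx => hx.1
  have hpos : 0 < {h | h ∉ S ∧ mult S < h}.ncard :=
    (Set.ncard_pos hfin).2 (hS.exists_gap_gt_mult hord)
  have htwo : 1 < {h | h ∉ S ∧ mult S < h}.ncard := by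
    unfold IsAlmostOrdinary at hao
    omega
  obtain ⟨t, ⟨htS, hmt⟩, htF⟩ := Set.exists_ne_of_one_lt_ncard htwo (frob S)
  exact hmt.trans_le (le_subFrob hS.2.2 htS htF)

end IsNumSgp

section Btrans

variable {S : Set ℕ}

theorem mem_Btrans {x : ℕ} : x ∈ Btrans S ↔ (x ∈ S ∧ x ≠ mult S) ∨ x = subFrob S := by
  simp only [Btrans, Set.mem_union, Set.mem_sdiff, Set.mem_singleton_iff]

theorem subFrob_mem_Btrans : subFrob S ∈ Btrans S := mem_Btrans.2 (Or.inr rfl)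

theorem mult_lt_of_mem_Btrans (hmu : mult S < subFrob S) {b : ℕ} (hb : b ∈ Btrans S)
    (hb0 : b ≠ 0) : mult S < b := by
  rcases mem_Btrans.1 hb with ⟨hbS, hbm⟩ | rfl
  · exact (mult_le hbS hb0).lt_of_ne' hbm
  · exact hmu

theorem mem_of_mem_Btrans_of_lt_subFrob {b : ℕ} (hb : b ∈ Btrans S) (hbu : b < subFrob S) :
    b ∈ S := by
  rcases mem_Btrans.1 hb with ⟨hbS, -⟩ | rfl
  · exact hbS
  · exact absurd hbu (lt_irrefl _)

variable (hS : IsNumSgp S) (hmu : mult S < subFrob S)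
include hS hmu

theorem subFrob_not_mem : subFrob S ∉ S :=
  (subFrob_mem_of_ne_zero hS.2.2 (by omega)).1

theorem frob_le_subFrob_add_mult : frob S ≤ subFrob S + mult S := by
  obtain ⟨huS, -⟩ := subFrob_mem_of_ne_zero hS.2.2 (by omega)
  have hmF : mult S < frob S := hmu.trans_le (le_frob hS.2.2 huS)
  have hFm : frob S - mult S ∉ S := fun h => by
    have := hS.2.1 _ h _ hS.mult_mem
    rw [Nat.sub_add_cancel hmF.le] at this
    exact frob_not_mem hS.2.2 ⟨_, huS⟩ this
  have := le_subFrob hS.2.2 hFm (by have := hS.mult_ne_zero; omega)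
  omega

theorem subFrob_add_mem_Btrans {b : ℕ} (hb : b ∈ Btrans S) (hb0 : b ≠ 0) :
    subFrob S + b ∈ Btrans S := by
  have hmb := mult_lt_of_mem_Btrans hmu hb hb0
  have hF := frob_le_subFrob_add_mult hS hmu
  exact mem_Btrans.2 (Or.inl ⟨mem_of_frob_lt hS.2.2 (by omega), by omega⟩)

theorem isNumSgp_Btrans : IsNumSgp (Btrans S) := by
  have hadd : ∀ a ∈ Btrans S, ∀ b ∈ Btrans S, a + b ∈ Btrans S := by
    intro a ha b hb
    rcases eq_or_ne a 0 with rfl | ha0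
    · simpa using hb
    rcases eq_or_ne b 0 with rfl | hb0
    · simpa using ha
    have hma := mult_lt_of_mem_Btrans hmu ha ha0
    rcases mem_Btrans.1 ha with ⟨haS, -⟩ | rfl
    · rcases mem_Btrans.1 hb with ⟨hbS, -⟩ | rfl
      · exact mem_Btrans.2 (Or.inl ⟨hS.2.1 a haS b hbS, by omega⟩)
      · rw [add_comm]
        exact subFrob_add_mem_Btrans hS hmu ha ha0
    · exact subFrob_add_mem_Btrans hS hmu hb hb0
  refine ⟨mem_Btrans.2 (Or.inl ⟨hS.1, hS.mult_ne_zero.symm⟩), hadd, ?_⟩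
  refine (hS.2.2.union (Set.finite_singleton (mult S))).subset fun x hx => ?_
  by_contra hxS
  simp only [Set.mem_union, Set.mem_compl_iff, Set.mem_singleton_iff, not_or, not_not] at hxS
  exact hx (mem_Btrans.2 (Or.inl hxS))

/-- A minimal generator `x` of `S` that decomposes in `Btrans S` is `subFrob S + c` with
`mult S < c`; then `x - mult S` is a gap above `subFrob S`, so it is `frob S`. -/
theorem IsMinGen.isMinGen_Btrans {x : ℕ} (hx : IsMinGen S x) (hxm : x ≠ mult S)
    (hxF : x ≠ frob S + mult S) : IsMinGen (Btrans S) x := by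
  obtain ⟨hxS, hx0, hxdec⟩ := hx
  have hmS := hS.mult_mem
  have hm0 := hS.mult_ne_zero
  have not_subFrob_add : ∀ c, mult S < c → x ≠ subFrob S + c := by
    intro c hmc hxc
    have hxmS : x - mult S ∉ S := fun h =>
      hxdec ⟨x - mult S, h, mult S, hmS, by omega, hm0, by omega⟩
    have := le_subFrob hS.2.2 hxmS (by omega)
    omega
  refine ⟨mem_Btrans.2 (Or.inl ⟨hxS, hxm⟩), hx0, ?_⟩
  rintro ⟨a, ha, b, hb, ha0, hb0, rfl⟩
  rcases mem_Btrans.1 ha with ⟨haS, -⟩ | rfl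
  · rcases mem_Btrans.1 hb with ⟨hbS, -⟩ | rfl
    · exact hxdec ⟨a, haS, b, hbS, ha0, hb0, rfl⟩
    · exact not_subFrob_add a (mult_lt_of_mem_Btrans hmu ha ha0) (add_comm _ _)
  · exact not_subFrob_add b (mult_lt_of_mem_Btrans hmu hb hb0) rfl

theorem isMinGen_Btrans_subFrob : IsMinGen (Btrans S) (subFrob S) := by
  refine ⟨subFrob_mem_Btrans, by omega, ?_⟩
  rintro ⟨a, ha, b, hb, ha0, hb0, hab⟩
  have haS := mem_of_mem_Btrans_of_lt_subFrob ha (by omega)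
  have hbS := mem_of_mem_Btrans_of_lt_subFrob hb (by omega)
  exact subFrob_not_mem hS hmu (hab ▸ hS.2.1 a haS b hbS)

theorem isMinGen_Btrans_two_mul_mult : IsMinGen (Btrans S) (2 * mult S) := by
  have hm0 := hS.mult_ne_zero
  refine ⟨mem_Btrans.2 (Or.inl ⟨hS.two_mul_mult_mem, by omega⟩), by omega, ?_⟩
  rintro ⟨a, ha, b, hb, ha0, hb0, hab⟩
  have := mult_lt_of_mem_Btrans hmu ha ha0
  have := mult_lt_of_mem_Btrans hmu hb hb0
  omega

theorem edim_le_edim_Btrans : edim S ≤ edim (Btrans S) := by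
  have hmS := hS.mult_mem
  have huS := subFrob_not_mem hS hmu
  refine Set.ncard_le_ncard_of_sdiff_pair_subset (a := mult S) (b := frob S + mult S)
    (isNumSgp_Btrans hS hmu).finite_setOf_isMinGen ?_ (c := 2 * mult S) (d := subFrob S)
    (fun h => huS (h ▸ hS.two_mul_mult_mem)) ⟨isMinGen_Btrans_two_mul_mult hS hmu, ?_⟩
    ⟨isMinGen_Btrans_subFrob hS hmu, fun hu => huS hu.1⟩
  · rintro x ⟨hx, hxmF⟩
    simp only [Set.mem_insert_iff, Set.mem_singleton_iff, not_or] at hxmF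
    exact hx.isMinGen_Btrans hS hmu hxmF.1 hxmF.2
  · exact fun h => h.2.2 ⟨mult S, hmS, mult S, hmS, hS.mult_ne_zero, hS.mult_ne_zero, two_mul _⟩

end Btrans

theorem Btrans_numsgp_and_edim (S : Set ℕ) (hS : IsNumSgp S)
    (hord : ¬ IsOrdinary S) (hao : ¬ IsAlmostOrdinary S) :
    IsNumSgp (Btrans S) ∧ edim (Btrans S) ≥ edim S := by
  have hmu := hS.mult_lt_subFrob hord hao
  exact ⟨isNumSgp_Btrans hS hmu, edim_le_edim_Btrans hS hmu⟩
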